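/- arXiv:1502.06689 — 4 statements merged into one kernel-verified Lean document; each statement's English description precedes it below -/
import Mathlib

section
/- (Restricted strong convexity along the segment.) Let f : ℝ → (0,1) be twice differentiable, let M, M* ∈ ℝ^{m×n} satisfy ‖M‖_∞ ≤ α and ‖M*‖_∞ ≤ α, and let M̃ = M* + γ(M − M*) for some γ ∈ [0,1]. Then for any Y ∈ {±1}^{m×n} and Ω ⊆ [m]×[n], the second derivative of the map t ↦ F_{Ω,Y}(M* + t(M − M*)) at t = γ (equivalently, the Hessian quadratic form of F_{Ω,Y} at M̃ applied to the direction M − M*) satisfies Σ_{(i,j)∈Ω} (∂²F_{Ω,Y}/∂M_ij²)(M̃) · (M_ij − M*_ij)² ≥ γ_α · ‖(M − M*)_Ω‖_F², where (A)_Ω zeroes out entries outside Ω. -/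
/-!
Along the segment, `F_{Ω,Y}` is a sum over `Ω` of one-variable losses `ℓ_y(M*_ij + t d_ij)` with
`d = M - M*`, `ℓ_1 = -log f` and `ℓ_{-1} = -log (1 - f)`, so its second derivative at `t = γ` is
`∑ ℓ_y''(M̃_ij) d_ij²`. Since `(-log g)'' = g'²/g² - g''/g`, the two values of `ℓ_y''` are exactly
the two expressions in the infimum defining `γ_α`, and `|M̃_ij| ≤ α` because `M̃_ij` lies between
`M*_ij` and `M_ij`.
-/

open MeasureTheory ProbabilityTheory

noncomputable section

/-- The Frobenius norm of a real matrix. -/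
def frob {m n : ℕ} (A : Matrix (Fin m) (Fin n) ℝ) : ℝ :=
  Real.sqrt (∑ i, ∑ j, (A i j) ^ 2)

/-- The spectral (ℓ₂ operator) norm of a real matrix; this is its largest singular value σ₁. -/
def specNorm {m n : ℕ} (A : Matrix (Fin m) (Fin n) ℝ) : ℝ :=
  sSup {c : ℝ | ∃ x : Fin n → ℝ, (∑ j, (x j) ^ 2) ≤ 1 ∧
    c = Real.sqrt (∑ i, (A.mulVec x i) ^ 2)}

/-- The second largest singular value, via the Eckart–Young characterization
σ₂(A) = inf { ‖A - B‖₂ : rank B ≤ 1 }. -/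
def sigma2 {m n : ℕ} (A : Matrix (Fin m) (Fin n) ℝ) : ℝ :=
  sInf {c : ℝ | ∃ B : Matrix (Fin m) (Fin n) ℝ, B.rank ≤ 1 ∧ c = specNorm (A - B)}

/-- The negative log-likelihood F_{Ω,Y}(M). -/
def FLL {m n : ℕ} (ΩS : Finset (Fin m × Fin n)) (Y : Matrix (Fin m) (Fin n) ℝ)
    (f : ℝ → ℝ) (M : Matrix (Fin m) (Fin n) ℝ) : ℝ :=
  -∑ p ∈ ΩS, ((if Y p.1 p.2 = 1 then Real.log (f (M p.1 p.2)) else 0)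
      + (if Y p.1 p.2 = -1 then Real.log (1 - f (M p.1 p.2)) else 0))

/-- The gradient ∇_M F_{Ω,Y}(M) of the negative log-likelihood, given entrywise by
Z_ij = ( -(f'(M_ij)/f(M_ij))·1{Y_ij=1} + (f'(M_ij)/(1-f(M_ij)))·1{Y_ij=-1} )·1{(i,j)∈Ω}. -/
def gradF {m n : ℕ} (ΩS : Finset (Fin m × Fin n)) (Y : Matrix (Fin m) (Fin n) ℝ)
    (f : ℝ → ℝ) (M : Matrix (Fin m) (Fin n) ℝ) : Matrix (Fin m) (Fin n) ℝ :=
  Matrix.of fun i j =>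
    if (i, j) ∈ ΩS then
      ((if Y i j = 1 then -(deriv f (M i j) / f (M i j)) else 0)
        + (if Y i j = -1 then deriv f (M i j) / (1 - f (M i j)) else 0))
    else 0

/-- Assumption (A1): the normalized all-ones vectors 1_m/√m and 1_n/√n form a singular
pair of G for its largest singular value σ₁(G) = specNorm G. -/
def AssumpA1 {m n : ℕ} (G : Matrix (Fin m) (Fin n) ℝ) : Prop :=
  (G.mulVec (fun _ => 1 / Real.sqrt n) = fun _ => specNorm G / Real.sqrt m) ∧
  (G.transpose.mulVec (fun _ => 1 / Real.sqrt m) = fun _ => specNorm G / Real.sqrt n)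

/-- R_Ω(Z): restriction of a matrix to the observed entries (zero outside Ω). -/
def samp {m n : ℕ} (ΩS : Finset (Fin m × Fin n)) (Z : Matrix (Fin m) (Fin n) ℝ) :
    Matrix (Fin m) (Fin n) ℝ :=
  Matrix.of fun i j => if (i, j) ∈ ΩS then Z i j else 0

/-- The constraint set C = {M : ‖M‖_∞ ≤ α, rank M ≤ r}. -/
def constr {m n : ℕ} (α : ℝ) (r : ℕ) : Set (Matrix (Fin m) (Fin n) ℝ) :=
  {M | (∀ i j, |M i j| ≤ α) ∧ M.rank ≤ r}

/-- The max-norm ‖Z‖_max = inf { max(‖U‖_{2,∞}², ‖V‖_{2,∞}²) : Z = U Vᵀ }. -/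
def maxNorm {m n : ℕ} (Z : Matrix (Fin m) (Fin n) ℝ) : ℝ :=
  sInf {c : ℝ | ∃ (k : ℕ) (U : Matrix (Fin m) (Fin k) ℝ) (V : Matrix (Fin n) (Fin k) ℝ),
    Z = U * V.transpose ∧
    c = max (⨆ i, ∑ ℓ, (U i ℓ) ^ 2) (⨆ j, ∑ ℓ, (V j ℓ) ^ 2)}

/-- The entrywise sup norm ‖Z‖_∞. -/
def entrySup {m n : ℕ} (Z : Matrix (Fin m) (Fin n) ℝ) : ℝ :=
  ⨆ p : Fin m × Fin n, |Z p.1 p.2|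

open Real

lemma iteratedDeriv_two_eq_of_hasDerivAt {F F' : ℝ → ℝ} {F'' x : ℝ}
    (hF : ∀ t, HasDerivAt F (F' t) t) (hF' : HasDerivAt F' F'' x) :
    iteratedDeriv 2 F x = F'' := by
  rw [iteratedDeriv_succ, iteratedDeriv_one, funext fun t => (hF t).deriv]
  exact hF'.deriv

lemma hasDerivAt_comp_add_mul {g : ℝ → ℝ} (hg : Differentiable ℝ g) (a d t : ℝ) :
    HasDerivAt (fun s => g (a + s * d)) (deriv g (a + t * d) * d) t := by
  have hlin : HasDerivAt (fun s => a + s * d) d t := by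
    simpa using ((hasDerivAt_id t).mul_const d).const_add a
  exact (hg _).hasDerivAt.comp t hlin

lemma iteratedDeriv_two_sum_comp_add_mul {ι : Type*} (s : Finset ι) {g : ι → ℝ → ℝ}
    (hg : ∀ i ∈ s, Differentiable ℝ (g i)) (hg' : ∀ i ∈ s, Differentiable ℝ (deriv (g i)))
    (a d : ι → ℝ) (x : ℝ) :
    iteratedDeriv 2 (fun t => ∑ i ∈ s, g i (a i + t * d i)) x =
      ∑ i ∈ s, deriv (deriv (g i)) (a i + x * d i) * d i ^ 2 := by
  refine iteratedDeriv_two_eq_of_hasDerivAt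
    (fun t => HasDerivAt.fun_sum fun i hi => hasDerivAt_comp_add_mul (hg i hi) (a i) (d i) t) ?_
  simpa only [sq, mul_assoc] using HasDerivAt.fun_sum fun i hi =>
    (hasDerivAt_comp_add_mul (hg' i hi) (a i) (d i) x).mul_const (d i)

lemma abs_add_mul_sub_le {a b α γ : ℝ} (ha : |a| ≤ α) (hb : |b| ≤ α)
    (hγ : γ ∈ Set.Icc (0 : ℝ) 1) :
    |a + γ * (b - a)| ≤ α :=
  abs_le.2 <| (convex_Icc (-α) α).add_smul_sub_mem (abs_le.1 ha) (abs_le.1 hb) hγ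

section NegLogComp

variable {g : ℝ → ℝ}

lemma differentiable_neg_log_comp (hg : Differentiable ℝ g) (hg0 : ∀ x, g x ≠ 0) :
    Differentiable ℝ fun x => -log (g x) :=
  fun x => ((hg x).log (hg0 x)).neg

lemma deriv_neg_log_comp (hg : Differentiable ℝ g) (hg0 : ∀ x, g x ≠ 0) :
    deriv (fun x => -log (g x)) = fun x => -(deriv g x / g x) :=
  funext fun x => ((hg x).hasDerivAt.log (hg0 x)).neg.deriv

lemma differentiable_deriv_neg_log_comp (hg : Differentiable ℝ g) (hg0 : ∀ x, g x ≠ 0)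
    (hg' : Differentiable ℝ (deriv g)) : Differentiable ℝ (deriv fun x => -log (g x)) := by
  rw [deriv_neg_log_comp hg hg0]
  exact fun x => ((hg' x).div (hg x) (hg0 x)).neg

lemma deriv_deriv_neg_log_comp (hg : Differentiable ℝ g) (hg0 : ∀ x, g x ≠ 0)
    (hg' : Differentiable ℝ (deriv g)) (x : ℝ) :
    deriv (deriv fun x => -log (g x)) x = deriv g x ^ 2 / g x ^ 2 - deriv (deriv g) x / g x := by
  rw [deriv_neg_log_comp hg hg0,
    ((hg' x).hasDerivAt.fun_div (hg x).hasDerivAt (hg0 x)).fun_neg.deriv]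
  field_simp
  ring

end NegLogComp

def entryNegLogLik (f : ℝ → ℝ) (y x : ℝ) : ℝ :=
  -((if y = 1 then log (f x) else 0) + (if y = -1 then log (1 - f x) else 0))

lemma FLL_eq_sum_entryNegLogLik {m n : ℕ} (ΩS : Finset (Fin m × Fin n))
    (Y : Matrix (Fin m) (Fin n) ℝ) (f : ℝ → ℝ) (M : Matrix (Fin m) (Fin n) ℝ) :
    FLL ΩS Y f M = ∑ p ∈ ΩS, entryNegLogLik f (Y p.1 p.2) (M p.1 p.2) := by
  simp only [FLL, entryNegLogLik, Finset.sum_neg_distrib]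

section EntryNegLogLik

variable {f : ℝ → ℝ}

lemma differentiable_deriv_const_sub (hf2 : Differentiable ℝ (deriv f)) (c : ℝ) :
    Differentiable ℝ (deriv fun x => c - f x) := by
  rw [deriv_const_sub']
  exact hf2.neg

lemma entryNegLogLik_one : entryNegLogLik f 1 = fun x => -log (f x) := by
  funext x; norm_num [entryNegLogLik]

lemma entryNegLogLik_neg_one : entryNegLogLik f (-1) = fun x => -log (1 - f x) := by
  funext x; norm_num [entryNegLogLik]

lemma differentiable_entryNegLogLik (hf1 : Differentiable ℝ f)
    (hf01 : ∀ x, f x ∈ Set.Ioo (0 : ℝ) 1) {y : ℝ} (hy : y = 1 ∨ y = -1) :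
    Differentiable ℝ (entryNegLogLik f y) := by
  rcases hy with rfl | rfl
  · rw [entryNegLogLik_one]
    exact differentiable_neg_log_comp hf1 fun x => (hf01 x).1.ne'
  · rw [entryNegLogLik_neg_one]
    exact differentiable_neg_log_comp (hf1.const_sub 1) fun x => sub_ne_zero.2 (hf01 x).2.ne'

lemma differentiable_deriv_entryNegLogLik (hf1 : Differentiable ℝ f)
    (hf2 : Differentiable ℝ (deriv f)) (hf01 : ∀ x, f x ∈ Set.Ioo (0 : ℝ) 1) {y : ℝ}
    (hy : y = 1 ∨ y = -1) : Differentiable ℝ (deriv (entryNegLogLik f y)) := by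
  rcases hy with rfl | rfl
  · rw [entryNegLogLik_one]
    exact differentiable_deriv_neg_log_comp hf1 (fun x => (hf01 x).1.ne') hf2
  · rw [entryNegLogLik_neg_one]
    exact differentiable_deriv_neg_log_comp (hf1.const_sub 1)
      (fun x => sub_ne_zero.2 (hf01 x).2.ne') (differentiable_deriv_const_sub hf2 1)

lemma le_deriv_deriv_entryNegLogLik (hf1 : Differentiable ℝ f)
    (hf2 : Differentiable ℝ (deriv f)) (hf01 : ∀ x, f x ∈ Set.Ioo (0 : ℝ) 1) {y c x : ℝ}
    (hy : y = 1 ∨ y = -1)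
    (hc : c ≤ deriv f x ^ 2 / f x ^ 2 - deriv (deriv f) x / f x ∧
      c ≤ deriv f x ^ 2 / (1 - f x) ^ 2 + deriv (deriv f) x / (1 - f x)) :
    c ≤ deriv (deriv (entryNegLogLik f y)) x := by
  rcases hy with rfl | rfl
  · rw [entryNegLogLik_one, deriv_deriv_neg_log_comp hf1 (fun x => (hf01 x).1.ne') hf2]
    exact hc.1
  · rw [entryNegLogLik_neg_one, deriv_deriv_neg_log_comp (hf1.const_sub 1)
      (fun x => sub_ne_zero.2 (hf01 x).2.ne') (differentiable_deriv_const_sub hf2 1),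
      deriv_const_sub', deriv.fun_neg, neg_sq, neg_div, sub_neg_eq_add]
    exact hc.2

end EntryNegLogLik

/-- Lemma 6.3, restricted strong convexity along the segment:
the second derivative of t ↦ F_{Ω,Y}(M* + t(M - M*)) at t = γ is at least
γ_α · ‖(M - M*)_Ω‖_F². -/
theorem one_bit_mc_restricted_strong_convexity
    (m n : ℕ) (α γα γ : ℝ)
    (M Mstar Y : Matrix (Fin m) (Fin n) ℝ)
    (ΩS : Finset (Fin m × Fin n)) (f : ℝ → ℝ)
    -- twice differentiable link f : ℝ → (0,1)
    (hf01 : ∀ x, f x ∈ Set.Ioo (0 : ℝ) 1)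
    (hf1 : Differentiable ℝ f) (hf2 : Differentiable ℝ (deriv f))
    (hY : ∀ i j, Y i j = 1 ∨ Y i j = -1)
    -- ‖M‖_∞ ≤ α and ‖M*‖_∞ ≤ α
    (hMα : ∀ i j, |M i j| ≤ α) (hMstarα : ∀ i j, |Mstar i j| ≤ α)
    -- γ_α as in (5)
    (hγα : ∀ x, |x| ≤ α →
      γα ≤ (deriv f x) ^ 2 / (f x) ^ 2 - deriv (deriv f) x / f x ∧
      γα ≤ (deriv f x) ^ 2 / (1 - f x) ^ 2 + deriv (deriv f) x / (1 - f x))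
    (hγ : γ ∈ Set.Icc (0 : ℝ) 1) :
    γα * ∑ p ∈ ΩS, (M p.1 p.2 - Mstar p.1 p.2) ^ 2 ≤
      iteratedDeriv 2 (fun t : ℝ => FLL ΩS Y f (Mstar + t • (M - Mstar))) γ := by
  have hsegment : (fun t : ℝ => FLL ΩS Y f (Mstar + t • (M - Mstar))) = fun t => ∑ p ∈ ΩS,
      entryNegLogLik f (Y p.1 p.2) (Mstar p.1 p.2 + t * (M p.1 p.2 - Mstar p.1 p.2)) := by
    funext t
    simp [FLL_eq_sum_entryNegLogLik]
  rw [hsegment, iteratedDeriv_two_sum_comp_add_mul ΩS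
    (fun p _ => differentiable_entryNegLogLik hf1 hf01 (hY p.1 p.2))
    (fun p _ => differentiable_deriv_entryNegLogLik hf1 hf2 hf01 (hY p.1 p.2)), Finset.mul_sum]
  gcongr with p
  exact le_deriv_deriv_entryNegLogLik hf1 hf2 hf01 (hY p.1 p.2)
    (hγα _ (abs_add_mul_sub_le (hMstarα p.1 p.2) (hMα p.1 p.2) hγ))
end
end

section
/- (Spectral deviation of the sampled matrix, max-norm version.) Let m ≥ n and let the bi-adjacency matrix G of Ω satisfy assumptions (A1) and (A2). Then for every Z ∈ ℝ^{m×n}, ‖ (√(mn)/σ₁(G))·R_Ω(Z) − Z ‖₂ ≤ (√(mn)·σ₂(G)/σ₁(G)) · ‖Z‖_max. -/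
/-!
Since G is the 0/1 indicator of Ω, R_Ω(Z) = G ⊙ Z; with J the all-ones matrix and
τ = σ₁(G)/√(mn), the deviation is (√(mn)/σ₁(G)) · (G - τJ) ⊙ Z. By (A1), τJ = σ₁(G) u vᵀ for the
normalized all-ones vectors u, v, so G - τJ is G with its top singular pair removed. Its spectral
norm is at most ‖G - B‖ for every B of rank ≤ 1: for z ⟂ v, B kills some w ≠ 0 in span{v, z}, and
since G maps v and v^⟂ into ℝu and u^⟂ respectively, ‖(G - B)w‖/‖w‖ ≥ ‖Gz‖/‖z‖. Hence
‖G - τJ‖ ≤ σ₂(G). Finally a Schur product with Z = UVᵀ is controlled by the rows of the factors,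
‖A ⊙ UVᵀ‖ ≤ ‖A‖ ‖U‖_{2,∞} ‖V‖_{2,∞}, by Cauchy–Schwarz in the bilinear form
yᵀ(A ⊙ UVᵀ)x = Σ_ℓ (U_ℓ ∘ y)ᵀ A (V_ℓ ∘ x).
-/

open MeasureTheory ProbabilityTheory

noncomputable section

open Module Matrix WithLp
open scoped RealInnerProductSpace Matrix.Norms.L2Operator

section RankOneApproximation

variable {E F : Type*} [NormedAddCommGroup E] [InnerProductSpace ℝ E]
  [NormedAddCommGroup F] [InnerProductSpace ℝ F]

theorem LinearMap.exists_apply_smul_add_smul_eq_zero {g : E →ₗ[ℝ] F}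
    [FiniteDimensional ℝ (LinearMap.range g)] (hg : finrank ℝ (LinearMap.range g) ≤ 1) (x y : E) :
    ∃ a b : ℝ, (a ≠ 0 ∨ b ≠ 0) ∧ g (a • x + b • y) = 0 := by
  have hdep : ¬ LinearIndependent ℝ ![g x, g y] := fun h => by
    have hspan : Submodule.span ℝ (Set.range ![g x, g y]) ≤ LinearMap.range g := by
      rw [Submodule.span_le]
      rintro _ ⟨i, rfl⟩
      fin_cases i <;> simp
    have := (finrank_span_eq_card h).symm.trans_le ((Submodule.finrank_mono hspan).trans hg)
    simp at this
  simp only [LinearIndependent.pair_iff, not_forall] at hdep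
  obtain ⟨a, b, hab, hne⟩ := hdep
  exact ⟨a, b, not_and_or.mp hne, by simpa using hab⟩

variable [FiniteDimensional ℝ E] {f g : E →L[ℝ] F} {u : F} {v : E}

theorem ContinuousLinearMap.norm_apply_le_norm_sub_of_inner_eq_zero (hu : ‖u‖ = 1)
    (hv : ‖v‖ = 1) (hfv : f v = ‖f‖ • u) (hfu : ∀ x, ⟪u, f x⟫ = ‖f‖ * ⟪v, x⟫)
    (hg : finrank ℝ (LinearMap.range (g : E →ₗ[ℝ] F)) ≤ 1) {z : E} (hz : ⟪v, z⟫ = 0) :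
    ‖f z‖ ≤ ‖f - g‖ * ‖z‖ := by
  rcases eq_or_ne z 0 with rfl | hz0
  · simp
  obtain ⟨a, b, hab, hgw⟩ :=
    LinearMap.exists_apply_smul_add_smul_eq_zero (g := (g : E →ₗ[ℝ] F)) hg v z
  set w := a • v + b • z
  have hw : ‖w‖ ^ 2 = a ^ 2 + b ^ 2 * ‖z‖ ^ 2 := by
    simp [w, norm_add_sq_real, norm_smul, inner_smul_left, inner_smul_right, hz, hv, mul_pow]
  have hfw : ‖(f - g) w‖ ^ 2 = a ^ 2 * ‖f‖ ^ 2 + b ^ 2 * ‖f z‖ ^ 2 := by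
    have : (f - g) w = a • f v + b • f z := by simpa [w] using hgw
    rw [this, hfv, norm_add_sq_real]
    simp [norm_smul, inner_smul_left, inner_smul_right, hfu, hz, hu, mul_pow]
  have hwpos : 0 < ‖w‖ := by
    have : 0 < a ^ 2 + b ^ 2 * ‖z‖ ^ 2 := by rcases hab with ha | hb <;> positivity
    exact (norm_nonneg w).lt_of_ne' (sq_pos_iff.mp (hw ▸ this))
  have hfz : ‖f z‖ ^ 2 ≤ ‖f‖ ^ 2 * ‖z‖ ^ 2 := by
    rw [← mul_pow]
    gcongr
    exact f.le_opNorm z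
  have key : (‖f z‖ * ‖w‖) ^ 2 ≤ (‖f - g‖ * ‖z‖ * ‖w‖) ^ 2 :=
    calc (‖f z‖ * ‖w‖) ^ 2 = ‖f z‖ ^ 2 * (a ^ 2 + b ^ 2 * ‖z‖ ^ 2) := by rw [mul_pow, hw]
      _ ≤ ‖z‖ ^ 2 * (a ^ 2 * ‖f‖ ^ 2 + b ^ 2 * ‖f z‖ ^ 2) := by
        nlinarith [mul_le_mul_of_nonneg_left hfz (sq_nonneg a)]
      _ = (‖z‖ * ‖(f - g) w‖) ^ 2 := by rw [mul_pow, hfw]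
      _ ≤ (‖f - g‖ * ‖z‖ * ‖w‖) ^ 2 := by
        rw [mul_comm ‖f - g‖, mul_assoc]
        gcongr
        exact (f - g).le_opNorm w
  exact le_of_mul_le_mul_right ((pow_le_pow_iff_left₀ (by positivity) (by positivity)
    two_ne_zero).mp key) hwpos

theorem ContinuousLinearMap.norm_sub_smul_rankOne_le (hu : ‖u‖ = 1) (hv : ‖v‖ = 1)
    (hfv : f v = ‖f‖ • u) (hfu : ∀ x, ⟪u, f x⟫ = ‖f‖ * ⟪v, x⟫)
    (hg : finrank ℝ (LinearMap.range (g : E →ₗ[ℝ] F)) ≤ 1) :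
    ‖f - ‖f‖ • InnerProductSpace.rankOne ℝ u v‖ ≤ ‖f - g‖ := by
  refine opNorm_le_bound _ (norm_nonneg _) fun y => ?_
  set z := y - ⟪v, y⟫ • v
  have hz : ⟪v, z⟫ = 0 := by simp [z, inner_sub_right, real_inner_smul_right, hv]
  have hfz : (f - ‖f‖ • InnerProductSpace.rankOne ℝ u v) y = f z := by
    simp [z, hfv, smul_smul, mul_comm]
  have hzy : ‖z‖ ≤ ‖y‖ := by
    have hy : ‖y‖ ^ 2 = ‖z‖ ^ 2 + ⟪v, y⟫ ^ 2 := by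
      conv_lhs => rw [show y = z + ⟪v, y⟫ • v by simp [z]]
      simp [norm_add_sq_real, real_inner_smul_right, norm_smul, hz, hv, real_inner_comm v z]
    exact (pow_le_pow_iff_left₀ (norm_nonneg _) (norm_nonneg _) two_ne_zero).mp
      (by nlinarith [sq_nonneg ⟪v, y⟫])
  rw [hfz]
  calc ‖f z‖ ≤ ‖f - g‖ * ‖z‖ := norm_apply_le_norm_sub_of_inner_eq_zero hu hv hfv hfu hg hz
    _ ≤ ‖f - g‖ * ‖y‖ := by gcongr

end RankOneApproximation

namespace Matrix

variable {m n k : Type*} [Fintype m] [Fintype n] [Fintype k]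

theorem finrank_range_toEuclideanLin [DecidableEq n] (B : Matrix m n ℝ) :
    finrank ℝ (LinearMap.range (toEuclideanLin B : EuclideanSpace ℝ n →ₗ[ℝ] _)) = B.rank := by
  rw [toEuclideanLin_eq_toLin_orthonormal, rank_eq_finrank_range_toLin B
    (EuclideanSpace.basisFun m ℝ).toBasis (EuclideanSpace.basisFun n ℝ).toBasis]

theorem l2_opNorm_sub_smul_vecMulVec_le [DecidableEq n] {G B : Matrix m n ℝ}
    {u : EuclideanSpace ℝ m} {v : EuclideanSpace ℝ n} (hu : ‖u‖ = 1) (hv : ‖v‖ = 1)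
    (hGv : G *ᵥ ofLp v = ‖G‖ • ofLp u) (hGu : Gᵀ *ᵥ ofLp u = ‖G‖ • ofLp v) (hB : B.rank ≤ 1) :
    ‖G - ‖G‖ • vecMulVec (ofLp u) (ofLp v)‖ ≤ ‖G - B‖ := by
  set T := (toEuclideanLin (𝕜 := ℝ) (m := m) (n := n)).trans LinearMap.toContinuousLinearMap
  have hTG : ‖T G‖ = ‖G‖ := rfl
  have hT : T (G - ‖G‖ • vecMulVec (ofLp u) (ofLp v)) =
      T G - ‖T G‖ • InnerProductSpace.rankOne ℝ u v := by
    ext x i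
    rw [hTG]
    simp [T, vecMulVec_mulVec, PiLp.inner_apply, dotProduct, mul_comm]
  rw [l2_opNorm_def, hT, l2_opNorm_def (G - B), map_sub]
  refine ContinuousLinearMap.norm_sub_smul_rankOne_le hu hv ?_ ?_ ?_
  · ext i
    rw [hTG]
    simpa [T] using congrFun hGv i
  · intro x
    rw [hTG]
    have h : ofLp u ⬝ᵥ (G *ᵥ ofLp x) = ‖G‖ * (ofLp v ⬝ᵥ ofLp x) := by
      rw [dotProduct_mulVec, ← mulVec_transpose, hGu, smul_dotProduct, smul_eq_mul]
    simpa [T, PiLp.inner_apply, dotProduct, mul_comm] using h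
  · exact (finrank_range_toEuclideanLin B).trans_le hB

theorem l2_opNorm_le_of_dotProduct_mulVec_le [DecidableEq n] {A : Matrix m n ℝ} {C : ℝ}
    (hC : 0 ≤ C) (h : ∀ (x : EuclideanSpace ℝ n) (y : EuclideanSpace ℝ m), ‖x‖ = 1 → ‖y‖ = 1 →
      ofLp y ⬝ᵥ (A *ᵥ ofLp x) ≤ C) : ‖A‖ ≤ C :=
  ContinuousLinearMap.opNorm_le_of_re_inner_le hC fun x y hx hy => by
    simpa [PiLp.inner_apply, dotProduct, mul_comm] using h x y hx hy

theorem dotProduct_mulVec_le_l2_opNorm [DecidableEq n] (A : Matrix m n ℝ)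
    (x : EuclideanSpace ℝ n) (y : EuclideanSpace ℝ m) :
    ofLp y ⬝ᵥ (A *ᵥ ofLp x) ≤ ‖A‖ * ‖x‖ * ‖y‖ :=
  calc ofLp y ⬝ᵥ (A *ᵥ ofLp x) = ⟪toLp 2 (A *ᵥ ofLp x), y⟫ := by
        simp [PiLp.inner_apply, dotProduct, mul_comm]
    _ ≤ ‖toLp 2 (A *ᵥ ofLp x)‖ * ‖y‖ := real_inner_le_norm _ _
    _ ≤ ‖A‖ * ‖x‖ * ‖y‖ := by
        gcongr
        exact ((toEuclideanLin.trans LinearMap.toContinuousLinearMap) A).le_opNorm x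

theorem sum_norm_sq_toLp_mul_le (V : Matrix n k ℝ) {b : ℝ} (hV : ∀ j, ∑ ℓ, V j ℓ ^ 2 ≤ b)
    (x : EuclideanSpace ℝ n) : ∑ ℓ, ‖toLp 2 (fun j => V j ℓ * x j)‖ ^ 2 ≤ b * ‖x‖ ^ 2 := by
  simp only [EuclideanSpace.real_norm_sq_eq, mul_pow, Finset.mul_sum]
  rw [Finset.sum_comm]
  gcongr with j
  rw [← Finset.sum_mul]
  exact mul_le_mul_of_nonneg_right (hV j) (sq_nonneg _)

theorem l2_opNorm_hadamard_mul_transpose_le [DecidableEq n] (A : Matrix m n ℝ)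
    (U : Matrix m k ℝ) (V : Matrix n k ℝ) {a b : ℝ} (hU : ∀ i, ∑ ℓ, U i ℓ ^ 2 ≤ a)
    (hV : ∀ j, ∑ ℓ, V j ℓ ^ 2 ≤ b) : ‖A ⊙ (U * Vᵀ)‖ ≤ ‖A‖ * √a * √b := by
  refine l2_opNorm_le_of_dotProduct_mulVec_le (by positivity) fun x y hx hy => ?_
  set p : k → EuclideanSpace ℝ n := fun ℓ => toLp 2 (fun j => V j ℓ * x j)
  set q : k → EuclideanSpace ℝ m := fun ℓ => toLp 2 (fun i => U i ℓ * y i)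
  have hsplit : ofLp y ⬝ᵥ ((A ⊙ (U * Vᵀ)) *ᵥ ofLp x) =
      ∑ ℓ, ofLp (q ℓ) ⬝ᵥ (A *ᵥ ofLp (p ℓ)) := by
    simp only [p, q, dotProduct, mulVec, hadamard_apply, mul_apply, transpose_apply,
      Finset.mul_sum]
    refine (Finset.sum_congr rfl fun i _ => Finset.sum_congr rfl fun j _ => ?_).trans
      ((Finset.sum_congr rfl fun i _ => Finset.sum_comm).trans Finset.sum_comm)
    rw [Finset.sum_mul, Finset.mul_sum]
    exact Finset.sum_congr rfl fun ℓ _ => by ring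
  have hp := sum_norm_sq_toLp_mul_le V hV x
  have hq := sum_norm_sq_toLp_mul_le U hU y
  rw [hx, one_pow, mul_one] at hp
  rw [hy, one_pow, mul_one] at hq
  calc ofLp y ⬝ᵥ ((A ⊙ (U * Vᵀ)) *ᵥ ofLp x) = ∑ ℓ, ofLp (q ℓ) ⬝ᵥ (A *ᵥ ofLp (p ℓ)) := hsplit
    _ ≤ ∑ ℓ, ‖A‖ * (‖q ℓ‖ * ‖p ℓ‖) := by
      gcongr with ℓ
      rw [← mul_assoc, mul_right_comm]
      exact dotProduct_mulVec_le_l2_opNorm A (p ℓ) (q ℓ)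
    _ ≤ ‖A‖ * (√(∑ ℓ, ‖q ℓ‖ ^ 2) * √(∑ ℓ, ‖p ℓ‖ ^ 2)) := by
      rw [← Finset.mul_sum]
      gcongr
      exact Real.sum_mul_le_sqrt_mul_sqrt _ _ _
    _ ≤ ‖A‖ * (√a * √b) :=
      mul_le_mul_of_nonneg_left (mul_le_mul (Real.sqrt_le_sqrt hq) (Real.sqrt_le_sqrt hp)
        (Real.sqrt_nonneg _) (Real.sqrt_nonneg _)) (norm_nonneg _)
    _ = ‖A‖ * √a * √b := (mul_assoc _ _ _).symm

end Matrix

theorem EuclideanSpace.norm_const_inv_sqrt_card {ι : Type*} [Fintype ι] [Nonempty ι] :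
    ‖toLp 2 (fun _ : ι => 1 / √(Fintype.card ι))‖ = 1 := by
  have : (0 : ℝ) < Fintype.card ι := by exact_mod_cast Fintype.card_pos
  simp [EuclideanSpace.norm_eq, Real.sq_sqrt this.le, this.ne']

theorem specNorm_eq_l2_opNorm {m n : ℕ} (A : Matrix (Fin m) (Fin n) ℝ) : specNorm A = ‖A‖ := by
  rw [l2_opNorm_def, ← ContinuousLinearMap.sSup_unitClosedBall_eq_norm, specNorm]
  congr 1
  ext c
  simp only [Set.mem_ofPred_eq, Set.mem_image, Metric.mem_closedBall, dist_zero_right]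
  constructor
  · rintro ⟨x, hx, rfl⟩
    exact ⟨toLp 2 x, by simpa [EuclideanSpace.norm_eq] using hx, by simp [EuclideanSpace.norm_eq]⟩
  · rintro ⟨x, hx, rfl⟩
    exact ⟨ofLp x, by simpa [EuclideanSpace.norm_eq] using hx, by simp [EuclideanSpace.norm_eq]⟩

theorem le_sigma2 {m n : ℕ} {A G : Matrix (Fin m) (Fin n) ℝ}
    (h : ∀ B : Matrix (Fin m) (Fin n) ℝ, B.rank ≤ 1 → ‖A‖ ≤ ‖G - B‖) : ‖A‖ ≤ sigma2 G := by
  refine le_csInf ⟨_, 0, by simp, rfl⟩ ?_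
  rintro _ ⟨B, hB, rfl⟩
  rw [specNorm_eq_l2_opNorm]
  exact h B hB

theorem maxNorm_nonneg {m n : ℕ} (Z : Matrix (Fin m) (Fin n) ℝ) : 0 ≤ maxNorm Z := by
  refine Real.sInf_nonneg ?_
  rintro _ ⟨k, U, V, -, rfl⟩
  exact le_max_of_le_left (Real.iSup_nonneg fun i => by positivity)

theorem l2_opNorm_hadamard_le_mul_maxNorm {m n : ℕ} (A Z : Matrix (Fin m) (Fin n) ℝ) :
    ‖A ⊙ Z‖ ≤ ‖A‖ * maxNorm Z := by
  rw [maxNorm, ← smul_eq_mul, ← Real.sInf_smul_of_nonneg (norm_nonneg A)]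
  refine le_csInf (Set.Nonempty.smul_set ⟨_, n, Z, 1, by simp, rfl⟩) ?_
  rintro _ ⟨_, ⟨k, U, V, rfl, rfl⟩, rfl⟩
  set c := max (⨆ i, ∑ ℓ, (U i ℓ) ^ 2) (⨆ j, ∑ ℓ, (V j ℓ) ^ 2)
  have hc : 0 ≤ c := le_max_of_le_left (Real.iSup_nonneg fun i => by positivity)
  have h := l2_opNorm_hadamard_mul_transpose_le A U V (a := c) (b := c)
    (fun i => le_max_of_le_left
      (le_ciSup (f := fun i => ∑ ℓ, U i ℓ ^ 2) (Set.finite_range _).bddAbove i))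
    (fun j => le_max_of_le_right
      (le_ciSup (f := fun j => ∑ ℓ, V j ℓ ^ 2) (Set.finite_range _).bddAbove j))
  rwa [mul_assoc, Real.mul_self_sqrt hc] at h

theorem AssumpA1.specNorm_pos {m n : ℕ} {G : Matrix (Fin m) (Fin n) ℝ} (hA1 : AssumpA1 G)
    (hn : 0 < n) (i : Fin m) (hi : 0 < ∑ j, G i j) : 0 < specNorm G := by
  have hrow := congrFun hA1.1 i
  simp only [mulVec, dotProduct, mul_one_div, ← Finset.sum_div] at hrow
  have : 0 < specNorm G / √m := hrow ▸ div_pos hi (by positivity)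
  exact (div_pos_iff_of_pos_right (Real.sqrt_pos.mpr (by exact_mod_cast i.pos))).mp this

theorem AssumpA1.l2_opNorm_sub_const_le_sigma2 {m n : ℕ} {G : Matrix (Fin m) (Fin n) ℝ}
    (hA1 : AssumpA1 G) (hm : 0 < m) (hn : 0 < n) :
    ‖G - of (fun _ _ => specNorm G / √(m * n))‖ ≤ sigma2 G := by
  have : NeZero m := ⟨hm.ne'⟩
  have : NeZero n := ⟨hn.ne'⟩
  set u : EuclideanSpace ℝ (Fin m) := toLp 2 (fun _ => 1 / √m)
  set v : EuclideanSpace ℝ (Fin n) := toLp 2 (fun _ => 1 / √n)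
  have hu : ‖u‖ = 1 := by simpa [u] using EuclideanSpace.norm_const_inv_sqrt_card (ι := Fin m)
  have hv : ‖v‖ = 1 := by simpa [v] using EuclideanSpace.norm_const_inv_sqrt_card (ι := Fin n)
  have hGuv : G - of (fun _ _ => specNorm G / √(m * n)) =
      G - ‖G‖ • vecMulVec (ofLp u) (ofLp v) := by
    ext i j
    simp [u, v, vecMulVec, specNorm_eq_l2_opNorm, Real.sqrt_mul (Nat.cast_nonneg m),
      div_eq_mul_inv, mul_comm]
  rw [hGuv]
  refine le_sigma2 fun B hB => l2_opNorm_sub_smul_vecMulVec_le hu hv ?_ ?_ hB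
  · change G *ᵥ (fun _ => 1 / √n) = ‖G‖ • fun _ => 1 / √m
    rw [hA1.1, ← specNorm_eq_l2_opNorm]
    ext i
    simp [div_eq_mul_inv]
  · change Gᵀ *ᵥ (fun _ => 1 / √m) = ‖G‖ • fun _ => 1 / √n
    rw [hA1.2, ← specNorm_eq_l2_opNorm]
    ext j
    simp [div_eq_mul_inv]

theorem samp_eq_hadamard {m n : ℕ} {ΩS : Finset (Fin m × Fin n)} {G : Matrix (Fin m) (Fin n) ℝ}
    (hGΩ : ∀ i j, ((i, j) ∈ ΩS ↔ G i j = 1)) (hG01 : ∀ i j, G i j = 0 ∨ G i j = 1)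
    (Z : Matrix (Fin m) (Fin n) ℝ) : samp ΩS Z = G ⊙ Z := by
  ext i j
  rcases hG01 i j with h | h <;> simp [samp, hGΩ, h]

theorem one_bit_mc_sampling_deviation_maxnorm_general
    (m n d : ℕ)
    (G : Matrix (Fin m) (Fin n) ℝ)
    (ΩS : Finset (Fin m × Fin n))
    (hn : 0 < n) (hnm : n ≤ m) (hd : 0 < d)
    -- G is the bi-adjacency (0/1) matrix of Ω, with d nonzero entries per row
    (hGΩ : ∀ i j, ((i, j) ∈ ΩS ↔ G i j = 1))
    (hG01 : ∀ i j, G i j = 0 ∨ G i j = 1)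
    (hrow : ∀ i, ∑ j, G i j = (d : ℝ))
    -- assumptions (A1) and (A2)
    (hA1 : AssumpA1 G) :
    ∀ Z : Matrix (Fin m) (Fin n) ℝ,
      specNorm ((Real.sqrt ((m : ℝ) * n) / specNorm G) • samp ΩS Z - Z) ≤
        Real.sqrt ((m : ℝ) * n) * sigma2 G / specNorm G * maxNorm Z := by
  intro Z
  have hm : 0 < m := hn.trans_le hnm
  have hσ : 0 < specNorm G := hA1.specNorm_pos hn ⟨0, hm⟩ (by rw [hrow]; exact_mod_cast hd)
  set κ := √(m * n) / specNorm G
  set H := G - of fun _ _ => specNorm G / √(m * n)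
  have hκ : 0 ≤ κ := by positivity
  have hdev : κ • samp ΩS Z - Z = κ • (H ⊙ Z) := by
    have : √(m * n) ≠ 0 := by positivity
    ext i j
    simp [samp_eq_hadamard hGΩ hG01, H, κ]
    field_simp
  rw [hdev, specNorm_eq_l2_opNorm, norm_smul, Real.norm_of_nonneg hκ]
  calc κ * ‖H ⊙ Z‖ ≤ κ * (‖H‖ * maxNorm Z) :=
        mul_le_mul_of_nonneg_left (l2_opNorm_hadamard_le_mul_maxNorm H Z) hκ
    _ ≤ κ * (sigma2 G * maxNorm Z) := mul_le_mul_of_nonneg_left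
        (mul_le_mul_of_nonneg_right (hA1.l2_opNorm_sub_const_le_sigma2 hm hn)
          (maxNorm_nonneg Z)) hκ
    _ = √(m * n) * sigma2 G / specNorm G * maxNorm Z := by ring

/-- Lemma 6.4, max-norm version: under (A1)–(A2), for every Z,
‖ (√(mn)/σ₁(G))·R_Ω(Z) − Z ‖₂ ≤ (√(mn)·σ₂(G)/σ₁(G))·‖Z‖_max. -/
theorem one_bit_mc_sampling_deviation_maxnorm
    (m n d : ℕ) (C : ℝ)
    (G : Matrix (Fin m) (Fin n) ℝ)
    (ΩS : Finset (Fin m × Fin n))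
    (hn : 0 < n) (hnm : n ≤ m) (hd : 0 < d)
    -- G is the bi-adjacency (0/1) matrix of Ω, with d nonzero entries per row
    (hGΩ : ∀ i j, ((i, j) ∈ ΩS ↔ G i j = 1))
    (hG01 : ∀ i j, G i j = 0 ∨ G i j = 1)
    (hrow : ∀ i, ∑ j, G i j = (d : ℝ))
    -- assumptions (A1) and (A2)
    (hA1 : AssumpA1 G)
    (hC : 0 < C) (hA2 : sigma2 G ≤ C * Real.sqrt d) :
    ∀ Z : Matrix (Fin m) (Fin n) ℝ,
      specNorm ((Real.sqrt ((m : ℝ) * n) / specNorm G) • samp ΩS Z - Z) ≤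
        Real.sqrt ((m : ℝ) * n) * sigma2 G / specNorm G * maxNorm Z :=
  one_bit_mc_sampling_deviation_maxnorm_general m n d G ΩS hn hnm hd hGΩ hG01 hrow hA1
end
end

section
/- (Probit model constant L_α.) Let σ > 0, α > 0, and f(x) = Φ(x/σ) where Φ is the standard normal cumulative distribution function. Then sup_{|x|≤α} f'(x)/(f(x)(1−f(x))) ≤ (4/σ)·(α/σ + 1), i.e., L_α ≤ (4/σ)(α/σ + 1). -/
/-!
With `z = x / σ` and `φ` the standard normal density, `f' x / (f x (1 - f x))` equals
`φ z / (σ Φ z (1 - Φ z))`. By the symmetry `Φ (-z) = 1 - Φ z` we may take `z ≥ 0`; then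
`Φ z ≥ 1/2`, and the Mills-type bound `1 - Φ z ≥ φ z / (z + 1)` holds because `-φ t / (t + 1)` is an antiderivative of
`φ t (t² + t + 1) / (t + 1)² ≤ φ t`. Hence `Φ z (1 - Φ z) ≥ φ z / (2 (|z| + 1))`, and the
ratio is at most `2 (|z| + 1) / σ ≤ 2 (α / σ + 1) / σ`.
-/

open MeasureTheory ProbabilityTheory Real Set Filter Topology

theorem hasDerivAt_integral_Iic {E : Type*} [NormedAddCommGroup E] [NormedSpace ℝ E]
    [CompleteSpace E] {g : ℝ → E} (hg : Integrable g) {x : ℝ} (hgx : ContinuousAt g x) :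
    HasDerivAt (fun u => ∫ t in Iic u, g t) (g x) x := by
  have hsplit :
      (fun u => ∫ t in Iic u, g t) = fun u => (∫ t in Iic 0, g t) + ∫ t in 0..u, g t := by
    funext u
    rw [← intervalIntegral.integral_Iic_sub_Iic hg.integrableOn hg.integrableOn, add_sub_cancel]
  rw [hsplit]
  exact (intervalIntegral.integral_hasDerivAt_right hg.intervalIntegrable
    hg.aestronglyMeasurable.stronglyMeasurableAtFilter hgx).const_add _

lemma continuous_gaussianPDFReal (μ : ℝ) (v : NNReal) : Continuous (gaussianPDFReal μ v) := by
  unfold gaussianPDFReal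
  fun_prop

lemma gaussianPDFReal_zero_one (t : ℝ) :
    gaussianPDFReal 0 1 t = exp (-t ^ 2 / 2) / √(2 * π) := by
  simp [gaussianPDFReal, div_eq_inv_mul]

lemma gaussianPDFReal_zero_one_neg (t : ℝ) :
    gaussianPDFReal 0 1 (-t) = gaussianPDFReal 0 1 t := by
  simp [gaussianPDFReal_zero_one]

lemma hasDerivAt_gaussianPDFReal_zero_one (t : ℝ) :
    HasDerivAt (gaussianPDFReal 0 1) (-t * gaussianPDFReal 0 1 t) t := by
  have hexponent : HasDerivAt (fun u : ℝ => -u ^ 2 / 2) (-t) t :=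
    ((hasDerivAt_pow 2 t).neg.div_const 2).congr_deriv (by norm_num; ring)
  rw [funext gaussianPDFReal_zero_one]
  exact (hexponent.exp.div_const (√(2 * π))).congr_deriv (by ring)

lemma tendsto_gaussianPDFReal_zero_one_atTop : Tendsto (gaussianPDFReal 0 1) atTop (𝓝 0) := by
  rw [funext gaussianPDFReal_zero_one, ← zero_div (√(2 * π))]
  refine Tendsto.div_const ?_ _
  have hsq : Tendsto (fun u : ℝ => u ^ 2 / 2) atTop atTop :=
    (tendsto_pow_atTop two_ne_zero).atTop_div_const two_pos
  refine (tendsto_exp_neg_atTop_nhds_zero.comp hsq).congr fun u => ?_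
  simp [neg_div]

lemma gaussianPDFReal_zero_one_div_le_integral_Ioi {z : ℝ} (hz : 0 ≤ z) :
    gaussianPDFReal 0 1 z / (z + 1) ≤ ∫ t in Ioi z, gaussianPDFReal 0 1 t := by
  set φ := gaussianPDFReal 0 1
  set ψ : ℝ → ℝ := fun t => φ t * (t ^ 2 + t + 1) / (t + 1) ^ 2
  have hderiv : ∀ t ∈ Ici z, HasDerivAt (fun u => -(φ u / (u + 1))) (ψ t) t := by
    intro t ht
    have ht1 : t + 1 ≠ 0 := by linarith [mem_Ici.1 ht]
    have hquot : HasDerivAt (fun u => φ u / (u + 1)) _ t :=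
      (hasDerivAt_gaussianPDFReal_zero_one t).div ((hasDerivAt_id' t).add_const 1) ht1
    refine hquot.neg.congr_deriv ?_
    simp only [ψ, φ]
    field_simp
    ring
  have hψ_bounds : ∀ t ∈ Ioi z, 0 ≤ ψ t ∧ ψ t ≤ φ t := by
    intro t ht
    have ht0 : 0 ≤ t := hz.trans (le_of_lt ht)
    have hφ := gaussianPDFReal_nonneg 0 1 t
    refine ⟨by positivity, ?_⟩
    rw [div_le_iff₀ (by positivity)]
    nlinarith
  have hψ_int : IntegrableOn ψ (Ioi z) := by
    refine (integrable_gaussianPDFReal 0 1).integrableOn.mono' ?_ ?_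
    · exact (by fun_prop : Measurable ψ).aestronglyMeasurable
    · refine ae_restrict_of_forall_mem measurableSet_Ioi fun t ht => ?_
      rw [norm_of_nonneg (hψ_bounds t ht).1]
      exact (hψ_bounds t ht).2
  have hlim : Tendsto (fun u => -(φ u / (u + 1))) atTop (𝓝 0) := by
    have := (tendsto_gaussianPDFReal_zero_one_atTop.mul
      (tendsto_inv_atTop_zero.comp (tendsto_atTop_add_const_right _ 1 tendsto_id))).neg
    simpa [div_eq_mul_inv] using this
  calc φ z / (z + 1) = ∫ t in Ioi z, ψ t := by
        rw [integral_Ioi_of_hasDerivAt_of_tendsto' hderiv hψ_int hlim]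
        ring
    _ ≤ ∫ t in Ioi z, φ t :=
        setIntegral_mono_on hψ_int (integrable_gaussianPDFReal 0 1).integrableOn measurableSet_Ioi
          fun t ht => (hψ_bounds t ht).2

noncomputable def stdNormalCDF (z : ℝ) : ℝ := ∫ t in Iic z, gaussianPDFReal 0 1 t

lemma hasDerivAt_stdNormalCDF (z : ℝ) : HasDerivAt stdNormalCDF (gaussianPDFReal 0 1 z) z :=
  hasDerivAt_integral_Iic (integrable_gaussianPDFReal 0 1)
    (continuous_gaussianPDFReal 0 1).continuousAt

lemma one_sub_stdNormalCDF (z : ℝ) :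
    1 - stdNormalCDF z = ∫ t in Ioi z, gaussianPDFReal 0 1 t := by
  have hint := integrable_gaussianPDFReal 0 1
  rw [stdNormalCDF, ← integral_gaussianPDFReal_eq_one 0 one_ne_zero,
    ← intervalIntegral.integral_Iic_add_Ioi hint.integrableOn hint.integrableOn,
    add_sub_cancel_left]

lemma stdNormalCDF_neg (z : ℝ) : stdNormalCDF (-z) = 1 - stdNormalCDF z := by
  rw [one_sub_stdNormalCDF, stdNormalCDF, ← integral_comp_neg_Ioi]
  simp only [gaussianPDFReal_zero_one_neg]

lemma monotone_stdNormalCDF : Monotone stdNormalCDF := fun _ _ hab =>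
  setIntegral_mono_set (integrable_gaussianPDFReal 0 1).integrableOn
    (ae_of_all _ (gaussianPDFReal_nonneg 0 1)) (Iic_subset_Iic.2 hab).eventuallyLE

lemma stdNormalCDF_zero : stdNormalCDF 0 = 1 / 2 := by
  have h := stdNormalCDF_neg 0
  rw [neg_zero] at h
  linarith

lemma gaussianPDFReal_zero_one_div_le_stdNormalCDF_mul_one_sub (z : ℝ) :
    gaussianPDFReal 0 1 z / (2 * (|z| + 1)) ≤ stdNormalCDF z * (1 - stdNormalCDF z) := by
  wlog hz : 0 ≤ z generalizing z
  · have h := this (-z) (by linarith)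
    rwa [gaussianPDFReal_zero_one_neg, abs_neg, stdNormalCDF_neg, sub_sub_cancel,
      mul_comm (1 - _)] at h
  have hhalf : 1 / 2 ≤ stdNormalCDF z := stdNormalCDF_zero ▸ monotone_stdNormalCDF hz
  have htail : gaussianPDFReal 0 1 z / (z + 1) ≤ 1 - stdNormalCDF z :=
    one_sub_stdNormalCDF z ▸ gaussianPDFReal_zero_one_div_le_integral_Ioi hz
  calc gaussianPDFReal 0 1 z / (2 * (|z| + 1))
      = 1 / 2 * (gaussianPDFReal 0 1 z / (z + 1)) := by
        rw [abs_of_nonneg hz]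
        field_simp
    _ ≤ stdNormalCDF z * (1 - stdNormalCDF z) :=
        mul_le_mul hhalf htail (div_nonneg (gaussianPDFReal_nonneg 0 1 z) (by linarith))
          (by linarith)

lemma gaussianPDFReal_zero_one_div_stdNormalCDF_mul_one_sub_le (z : ℝ) :
    gaussianPDFReal 0 1 z / (stdNormalCDF z * (1 - stdNormalCDF z)) ≤ 2 * (|z| + 1) := by
  have hbound := gaussianPDFReal_zero_one_div_le_stdNormalCDF_mul_one_sub z
  have hpos : 0 < gaussianPDFReal 0 1 z / (2 * (|z| + 1)) :=
    div_pos (gaussianPDFReal_pos 0 1 z one_ne_zero) (by positivity)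
  rw [div_le_iff₀ (hpos.trans_le hbound)]
  rw [div_le_iff₀ (by positivity)] at hbound
  linarith

theorem one_bit_mc_probit_L_alpha_general
    (σ α : ℝ) (hσ : 0 < σ)
    (Φ f : ℝ → ℝ)
    (hΦ : ∀ x, Φ x = ∫ t in Set.Iic x, Real.exp (-t ^ 2 / 2) / Real.sqrt (2 * Real.pi))
    (hf : ∀ x, f x = Φ (x / σ)) :
    ∀ x : ℝ, |x| ≤ α →
      deriv f x / (f x * (1 - f x)) ≤ 4 / σ * (α / σ + 1) := by
  have hf' : ∀ x, f x = stdNormalCDF (x / σ) := fun x => by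
    simp only [hf, hΦ, stdNormalCDF, gaussianPDFReal_zero_one]
  intro x hx
  have hderiv : deriv f x = gaussianPDFReal 0 1 (x / σ) / σ := by
    have h : HasDerivAt f (gaussianPDFReal 0 1 (x / σ) * (1 / σ)) x := by
      rw [funext hf']
      exact (hasDerivAt_stdNormalCDF _).comp x ((hasDerivAt_id' x).div_const σ)
    rw [h.deriv, mul_one_div]
  have hz : |x / σ| ≤ α / σ := by
    rw [abs_div, abs_of_pos hσ]
    gcongr
  calc deriv f x / (f x * (1 - f x))
      = gaussianPDFReal 0 1 (x / σ) / (stdNormalCDF (x / σ) * (1 - stdNormalCDF (x / σ)))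
          / σ := by
        rw [hderiv, hf']
        ring
    _ ≤ 2 * (|x / σ| + 1) / σ := by
        gcongr
        exact gaussianPDFReal_zero_one_div_stdNormalCDF_mul_one_sub_le _
    _ ≤ 4 / σ * (α / σ + 1) := by
        rw [div_mul_eq_mul_div]
        gcongr
        linarith [abs_nonneg (x / σ)]

/-- Probit model constant L_α: for the probit link f(x) = Φ(x/σ) with Φ
the standard normal CDF, sup_{|x|≤α} f'(x)/(f(x)(1−f(x))) ≤ (4/σ)(α/σ + 1). -/
theorem one_bit_mc_probit_L_alpha
    (σ α : ℝ) (hσ : 0 < σ) (hα : 0 < α)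
    (Φ f : ℝ → ℝ)
    (hΦ : ∀ x, Φ x = ∫ t in Set.Iic x, Real.exp (-t ^ 2 / 2) / Real.sqrt (2 * Real.pi))
    (hf : ∀ x, f x = Φ (x / σ)) :
    ∀ x : ℝ, |x| ≤ α →
      deriv f x / (f x * (1 - f x)) ≤ 4 / σ * (α / σ + 1) :=
  one_bit_mc_probit_L_alpha_general σ α hσ Φ f hΦ hf
end

section
/- (Spectral-norm concentration of the realized gradient.) Let ‖M*‖_∞ ≤ α, let f : ℝ → (0,1) be twice differentiable with L_α < ∞, and let Y follow the 1-bit observation model with independent entries over (i,j) ∈ Ω. Let Z = ∇_M F_{Ω,Y}(M*), an m×n random matrix (m ≥ n) with independent entries. Then for every ε ∈ (0,1) there exist a constant C₁(ε) depending only on ε and a universal constant C₂ > 0 such that P( ‖Z‖₂ ≥ 2.01·L_α·√m ) ≤ C₁(ε)·exp(−C₂·m). -/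
open MeasureTheory ProbabilityTheory

noncomputable section

/-!
Entry `(i, j)` of `Z = ∇F_{Ω,Y}(M*)` is a function of the sign `Y_ij` alone, so the entries are
independent; each takes two values whose mean `f · (-f'/f) + (1 - f) · f'/(1 - f)` vanishes and
whose gap `|f'| / (f (1 - f))` is at most `L_α`. Hoeffding's inequality then gives
`P(xᵀ Z y ≥ s) ≤ exp (-2 s² / L_α²)` for all unit vectors `x`, `y`.

If `(u, v)` is a top singular pair of `Z` and `x`, `y` lie within `1/5` of `u`, `v`, then
`xᵀ Z y ≥ (1 - 2/25) ‖Z‖₂`: the first-order errors cancel because `u`, `v` are singular vectors.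
A volume argument gives `1/5`-nets of the unit spheres of `ℝᵐ` and `ℝⁿ` with at most `11ᵐ` and
`11ⁿ` points, and a union bound over pairs of net points yields
`P(‖Z‖₂ ≥ 2.01 L_α √m) ≤ 121ᵐ exp (-2 (0.92 · 2.01)² m) ≤ exp (-m)`, so `C₁ = C₂ = 1` works.
-/

section GradientConcentration
open Set Metric Module
open scoped NNReal ENNReal RealInnerProductSpace

section SphereNet
variable {E : Type*} [NormedAddCommGroup E] [NormedSpace ℝ E] [FiniteDimensional ℝ E]

theorem card_le_of_isSeparated_of_subset_closedBall {ε : ℝ≥0} (hε : 0 < ε) {F : Finset E}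
    (hF : (F : Set E) ⊆ closedBall 0 1) (hsep : IsSeparated ε (F : Set E)) :
    (F.card : ℝ) ≤ (1 + 2 / ε) ^ finrank ℝ E := by
  borelize E
  set μ : Measure E := Measure.addHaar
  have hr : (0 : ℝ) < ε / 2 := by positivity
  have hdisj : (F : Set E).PairwiseDisjoint fun x => ball x (ε / 2) := by
    intro x hx y hy hxy
    refine ball_disjoint_ball ?_
    have h : (ε : ℝ≥0∞) < edist x y := hsep hx hy hxy
    rw [edist_dist, ← ENNReal.ofReal_coe_nnreal] at h
    linarith [(ENNReal.ofReal_lt_ofReal_iff'.1 h).1]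
  have hsub : (⋃ x ∈ F, ball x (ε / 2)) ⊆ ball (0 : E) (1 + ε / 2) := by
    refine iUnion₂_subset fun x hx => ball_subset_ball' ?_
    have := hF hx
    rw [mem_closedBall, dist_zero_right] at this
    rw [dist_zero_right]; linarith
  have hvol := (measure_biUnion_finset (μ := μ) hdisj fun x _ => measurableSet_ball).symm.le.trans
    (measure_mono hsub)
  simp only [μ.addHaar_ball_of_pos _ hr,
    μ.addHaar_ball_of_pos _ (by positivity : (0 : ℝ) < 1 + ε / 2),
    Finset.sum_const, nsmul_eq_mul, ← mul_assoc] at hvol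
  rw [ENNReal.mul_le_mul_iff_left (measure_ball_pos μ 0 one_pos).ne' measure_ball_lt_top.ne,
    ← ENNReal.ofReal_natCast, ← ENNReal.ofReal_mul (by positivity),
    ENNReal.ofReal_le_ofReal_iff (by positivity)] at hvol
  calc (F.card : ℝ) = F.card * (ε / 2) ^ finrank ℝ E / (ε / 2) ^ finrank ℝ E := by field_simp
    _ ≤ (1 + ε / 2) ^ finrank ℝ E / (ε / 2) ^ finrank ℝ E := by gcongr
    _ = (1 + 2 / ε) ^ finrank ℝ E := by rw [← div_pow]; congr 1; field_simp; ring

theorem packingNumber_le_of_subset_closedBall {ε : ℝ≥0} (hε : 0 < ε) {A : Set E}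
    (hA : A ⊆ closedBall 0 1) : packingNumber ε A ≤ ⌊(1 + 2 / (ε : ℝ)) ^ finrank ℝ E⌋₊ := by
  refine iSup₂_le fun C hCA => iSup_le fun hsep => ?_
  by_contra! hlt
  set k := ⌊(1 + 2 / (ε : ℝ)) ^ finrank ℝ E⌋₊
  have hle : ((k + 1 : ℕ) : ℕ∞) ≤ C.encard := by exact_mod_cast Order.add_one_le_of_lt hlt
  obtain ⟨D, hDC, hDcard⟩ := exists_subset_encard_eq hle
  have hDfin : D.Finite := finite_of_encard_eq_coe hDcard
  have := card_le_of_isSeparated_of_subset_closedBall hε (F := hDfin.toFinset)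
    (by simpa using (hDC.trans hCA).trans hA) (by simpa using hsep.subset hDC)
  rw [← ncard_eq_toFinset_card _ hDfin, ncard_def, hDcard, ENat.toNat_natCast] at this
  push_cast at this
  linarith [Nat.lt_floor_add_one ((1 + 2 / (ε : ℝ)) ^ finrank ℝ E)]

theorem exists_finset_subset_sphere_isCover {ε : ℝ≥0} (hε : 0 < ε) :
    ∃ N : Finset E, (N : Set E) ⊆ sphere 0 1 ∧ IsCover ε (sphere (0 : E) 1) N ∧
      (N.card : ℝ) ≤ (1 + 2 / ε) ^ finrank ℝ E := by
  have hfin : packingNumber ε (sphere (0 : E) 1) ≠ ⊤ :=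
    ne_top_of_le_ne_top (by simp)
      (packingNumber_le_of_subset_closedBall hε sphere_subset_closedBall)
  have hNfin : (maximalSeparatedSet ε (sphere (0 : E) 1)).Finite := by
    rw [← encard_ne_top_iff, encard_maximalSeparatedSet hfin]; exact hfin
  refine ⟨hNfin.toFinset, by simpa using maximalSeparatedSet_subset,
    by simpa using isCover_maximalSeparatedSet hfin, ?_⟩
  exact card_le_of_isSeparated_of_subset_closedBall hε
    (by simpa using maximalSeparatedSet_subset.trans sphere_subset_closedBall)
    (by simpa using isSeparated_maximalSeparatedSet)

end SphereNet

theorem ContinuousLinearMap.exists_norm_eq_one_norm_apply_eq {E F : Type*} [NormedAddCommGroup E]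
    [NormedSpace ℝ E] [FiniteDimensional ℝ E] [NormedAddCommGroup F] [NormedSpace ℝ F]
    (T : E →L[ℝ] F) (hT : T ≠ 0) : ∃ v : E, ‖v‖ = 1 ∧ ‖T v‖ = ‖T‖ := by
  obtain ⟨v, hv, hTv⟩ : ∃ v ∈ closedBall (0 : E) 1, ‖T v‖ = ‖T‖ := by
    rw [← T.sSup_unitClosedBall_eq_norm]
    exact ((isCompact_closedBall 0 1).image (by fun_prop)).sSup_mem
      ((nonempty_closedBall.2 zero_le_one).image _)
  have hle : ‖T‖ * 1 ≤ ‖T‖ * ‖v‖ := by simpa [hTv] using T.le_opNorm v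
  exact ⟨v, le_antisymm (by simpa using hv) (le_of_mul_le_mul_left hle (norm_pos_iff.2 hT)), hTv⟩

namespace ContinuousLinearMap
variable {E F : Type*} [NormedAddCommGroup E] [InnerProductSpace ℝ E]
  [NormedAddCommGroup F] [InnerProductSpace ℝ F] [CompleteSpace F]

theorem mul_norm_le_inner_apply_of_singular_pair [CompleteSpace E] (T : E →L[ℝ] F) {u x : F}
    {v y : E} (hu : ‖u‖ = 1) (hv : ‖v‖ = 1) (hx : ‖x‖ = 1) (hy : ‖y‖ = 1)
    (hTv : T v = ‖T‖ • u) (hTu : adjoint T u = ‖T‖ • v) {ε : ℝ}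
    (hxu : ‖x - u‖ ≤ ε) (hyv : ‖y - v‖ ≤ ε) :
    (1 - 2 * ε ^ 2) * ‖T‖ ≤ ⟪x, T y⟫ := by
  have hxu_inner : ⟪x, u⟫ = 1 - ‖x - u‖ ^ 2 / 2 := by
    rw [norm_sub_sq_real, hx, hu]; ring
  have hvy_inner : ⟪v, y - v⟫ = -(‖y - v‖ ^ 2 / 2) := by
    rw [inner_sub_right, real_inner_comm, norm_sub_sq_real, hy, hv, real_inner_self_eq_norm_sq, hv]
    ring
  have hsplit : ⟪x, T y⟫ = ‖T‖ * ⟪x, u⟫ + ‖T‖ * ⟪v, y - v⟫ + ⟪x - u, T (y - v)⟫ := by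
    have : ⟪u, T (y - v)⟫ = ‖T‖ * ⟪v, y - v⟫ := by
      rw [← adjoint_inner_left, hTu, real_inner_smul_left]
    rw [inner_sub_left, this, map_sub, hTv, inner_sub_right x, real_inner_smul_right]
    ring
  have hcross : |⟪x - u, T (y - v)⟫| ≤ ‖T‖ * ε ^ 2 :=
    calc |⟪x - u, T (y - v)⟫| ≤ ‖x - u‖ * (‖T‖ * ‖y - v‖) :=
          (abs_real_inner_le_norm _ _).trans (by gcongr; exact T.le_opNorm _)
      _ ≤ ε * (‖T‖ * ε) := by gcongr; exact (norm_nonneg _).trans hxu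
      _ = ‖T‖ * ε ^ 2 := by ring
  have hxu2 : ‖x - u‖ ^ 2 ≤ ε ^ 2 := pow_le_pow_left₀ (norm_nonneg _) hxu 2
  have hyv2 : ‖y - v‖ ^ 2 ≤ ε ^ 2 := pow_le_pow_left₀ (norm_nonneg _) hyv 2
  rw [hsplit, hxu_inner, hvy_inner]
  nlinarith [neg_abs_le ⟪x - u, T (y - v)⟫, norm_nonneg T]

variable [FiniteDimensional ℝ E]

theorem exists_singular_pair (T : E →L[ℝ] F) (hT : T ≠ 0) :
    ∃ (u : F) (v : E), ‖u‖ = 1 ∧ ‖v‖ = 1 ∧ T v = ‖T‖ • u ∧ adjoint T u = ‖T‖ • v := by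
  obtain ⟨v, hv, hTv⟩ := T.exists_norm_eq_one_norm_apply_eq hT
  have hTpos : 0 < ‖T‖ := norm_pos_iff.2 hT
  set u := ‖T‖⁻¹ • T v
  have hu : ‖u‖ = 1 := by simp [u, norm_smul, hTv, hTpos.ne']
  have hTv_eq : T v = ‖T‖ • u := by simp [u, smul_smul, hTpos.ne']
  refine ⟨u, v, hu, hv, hTv_eq, ?_⟩
  have hinner : ⟪adjoint T u, v⟫ = ‖T‖ := by
    rw [adjoint_inner_left, hTv_eq, real_inner_smul_right, real_inner_self_eq_norm_sq, hu]
    ring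
  have hnorm : ‖adjoint T u‖ = ‖T‖ := by
    refine le_antisymm ?_ ?_
    · simpa [hu] using (adjoint T).le_opNorm u
    · simpa [hinner, hv] using real_inner_le_norm (adjoint T u) v
  -- equality in Cauchy–Schwarz
  have := inner_eq_norm_mul_iff_real.1 (by rw [hinner, hnorm, hv, mul_one])
  simpa [hv, hnorm] using this

theorem exists_mem_mul_norm_le_inner_apply (T : E →L[ℝ] F) (hT : T ≠ 0) {ε : ℝ≥0} {NF : Set F}
    {NE : Set E} (hNF : NF ⊆ sphere 0 1) (hNE : NE ⊆ sphere 0 1)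
    (hcovF : IsCover ε (sphere 0 1) NF) (hcovE : IsCover ε (sphere 0 1) NE) :
    ∃ x ∈ NF, ∃ y ∈ NE, (1 - 2 * (ε : ℝ) ^ 2) * ‖T‖ ≤ ⟪x, T y⟫ := by
  obtain ⟨u, v, hu, hv, hTv, hTu⟩ := T.exists_singular_pair hT
  obtain ⟨x, hx, hxu⟩ := mem_iUnion₂.1 (isCover_iff_subset_iUnion_closedBall.1 hcovF
    (mem_sphere_zero_iff_norm.2 hu))
  obtain ⟨y, hy, hyv⟩ := mem_iUnion₂.1 (isCover_iff_subset_iUnion_closedBall.1 hcovE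
    (mem_sphere_zero_iff_norm.2 hv))
  rw [mem_closedBall, dist_comm, dist_eq_norm] at hxu hyv
  exact ⟨x, hx, y, hy, T.mul_norm_le_inner_apply_of_singular_pair hu hv
    (mem_sphere_zero_iff_norm.1 (hNF hx)) (mem_sphere_zero_iff_norm.1 (hNE hy)) hTv hTu hxu hyv⟩

end ContinuousLinearMap

section Matrix
variable {m n : ℕ}

theorem specNorm_eq_norm_toContinuousLinearMap (A : Matrix (Fin m) (Fin n) ℝ) :
    specNorm A = ‖LinearMap.toContinuousLinearMap (Matrix.toEuclideanLin A)‖ := by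
  rw [← ContinuousLinearMap.sSup_unitClosedBall_eq_norm, specNorm]
  congr 1
  ext c
  simp only [mem_ofPred_eq, mem_image, mem_closedBall, dist_zero_right]
  constructor
  · rintro ⟨x, hx, rfl⟩
    refine ⟨WithLp.toLp 2 x, ?_, ?_⟩
    · rw [EuclideanSpace.norm_eq, Real.sqrt_le_one]
      simpa using hx
    · simp [EuclideanSpace.norm_eq, Matrix.toLpLin_apply]
  · rintro ⟨x, hx, rfl⟩
    refine ⟨WithLp.ofLp x, ?_, ?_⟩
    · rw [EuclideanSpace.norm_eq, Real.sqrt_le_one] at hx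
      simpa using hx
    · simp [EuclideanSpace.norm_eq, Matrix.toLpLin_apply]

theorem inner_toEuclideanLin_eq_sum (A : Matrix (Fin m) (Fin n) ℝ) (x : EuclideanSpace ℝ (Fin m))
    (y : EuclideanSpace ℝ (Fin n)) :
    ⟪x, Matrix.toEuclideanLin A y⟫ = ∑ p : Fin m × Fin n, x p.1 * y p.2 * A p.1 p.2 := by
  simp only [Matrix.toLpLin_apply, PiLp.inner_apply, Matrix.mulVec, dotProduct, RCLike.inner_apply,
    Real.ringHom_apply, Finset.sum_mul, Fintype.sum_prod_type]
  exact Finset.sum_congr rfl fun i _ => Finset.sum_congr rfl fun j _ => by ring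

end Matrix

theorem measureReal_le_sum_mul_le {Ω ι : Type*} [MeasurableSpace Ω] {μ : Measure Ω}
    [IsProbabilityMeasure μ] [Fintype ι] {X : ι → Ω → ℝ} (hind : iIndepFun X μ)
    (hmeas : ∀ i, AEMeasurable (X i) μ) (hmean : ∀ i, μ[X i] = 0) {lo : ι → ℝ} {L : ℝ}
    (hbound : ∀ i, ∀ᵐ ω ∂μ, X i ω ∈ Icc (lo i) (lo i + L)) {w : ι → ℝ}
    (hw : ∑ i, w i ^ 2 = 1) {t : ℝ} (ht : 0 ≤ t) :
    μ.real {ω | t ≤ ∑ i, w i * X i ω} ≤ Real.exp (-2 * t ^ 2 / L ^ 2) := by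
  have hsubG : ∀ i ∈ (Finset.univ : Finset ι), HasSubgaussianMGF (fun ω => w i * X i ω)
      (‖w i‖₊ ^ 2 * (‖L‖₊ / 2) ^ 2) μ := fun i _ => by
    convert (hasSubgaussianMGF_of_mem_Icc_of_integral_eq_zero (hmeas i) (hbound i)
      (hmean i)).const_mul (w i) using 2
    ext
    rw [NNReal.coe_mul]
    simp
    rfl
  have hind' : iIndepFun (fun i ω => w i * X i ω) μ :=
    hind.comp (fun i x => w i * x) fun i => measurable_const_mul (w i)
  refine (HasSubgaussianMGF.measure_sum_ge_le_of_iIndepFun hind' hsubG ht).trans_eq ?_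
  have hsum : ((∑ i, ‖w i‖₊ ^ 2 * (‖L‖₊ / 2) ^ 2 : ℝ≥0) : ℝ) = L ^ 2 / 4 := by
    push_cast
    simp only [Real.norm_eq_abs, sq_abs, div_pow, ← Finset.sum_mul, hw]
    ring
  rw [hsum]
  ring_nf

section RandomMatrix
variable {Ω : Type*} [MeasurableSpace Ω] {μ : Measure Ω} [IsProbabilityMeasure μ] {m n : ℕ}
  {Z : Ω → Matrix (Fin m) (Fin n) ℝ} {lo : Fin m × Fin n → ℝ} {L : ℝ}

theorem measure_le_inner_toEuclideanLin_le
    (hind : iIndepFun (fun (p : Fin m × Fin n) ω => Z ω p.1 p.2) μ)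
    (hmeas : ∀ p : Fin m × Fin n, AEMeasurable (fun ω => Z ω p.1 p.2) μ)
    (hmean : ∀ p : Fin m × Fin n, ∫ ω, Z ω p.1 p.2 ∂μ = 0)
    (hbound : ∀ p, ∀ᵐ ω ∂μ, Z ω p.1 p.2 ∈ Icc (lo p) (lo p + L))
    {x : EuclideanSpace ℝ (Fin m)} {y : EuclideanSpace ℝ (Fin n)} (hx : ‖x‖ = 1) (hy : ‖y‖ = 1)
    {s : ℝ} (hs : 0 ≤ s) :
    μ {ω | s ≤ ⟪x, Matrix.toEuclideanLin (Z ω) y⟫} ≤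
      ENNReal.ofReal (Real.exp (-2 * s ^ 2 / L ^ 2)) := by
  have hsq : ∀ {k : ℕ} (z : EuclideanSpace ℝ (Fin k)), ‖z‖ = 1 → ∑ i, z i ^ 2 = 1 := fun z hz => by
    simpa [EuclideanSpace.norm_sq_eq, hz] using (EuclideanSpace.norm_sq_eq z).symm
  have hw : ∑ p : Fin m × Fin n, (x p.1 * y p.2) ^ 2 = 1 := by
    simp only [Fintype.sum_prod_type, mul_pow, ← Finset.mul_sum, ← Finset.sum_mul, hsq x hx,
      hsq y hy, one_mul]
  simp_rw [inner_toEuclideanLin_eq_sum]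
  rw [← ofReal_measureReal]
  exact ENNReal.ofReal_le_ofReal (measureReal_le_sum_mul_le hind hmeas hmean hbound hw hs)

theorem measure_le_specNorm_le
    (hind : iIndepFun (fun (p : Fin m × Fin n) ω => Z ω p.1 p.2) μ)
    (hmeas : ∀ p : Fin m × Fin n, AEMeasurable (fun ω => Z ω p.1 p.2) μ)
    (hmean : ∀ p : Fin m × Fin n, ∫ ω, Z ω p.1 p.2 ∂μ = 0)
    (hbound : ∀ p, ∀ᵐ ω ∂μ, Z ω p.1 p.2 ∈ Icc (lo p) (lo p + L)) {t : ℝ} (ht : 0 < t) :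
    μ {ω | t ≤ specNorm (Z ω)} ≤
      ENNReal.ofReal (11 ^ m * 11 ^ n * Real.exp (-2 * (23 / 25 * t) ^ 2 / L ^ 2)) := by
  have net : ∀ k : ℕ, ∃ N : Finset (EuclideanSpace ℝ (Fin k)),
      (N : Set _) ⊆ sphere (0 : EuclideanSpace ℝ (Fin k)) 1 ∧
      IsCover (1 / 5) (sphere (0 : EuclideanSpace ℝ (Fin k)) 1) N ∧ (N.card : ℝ) ≤ 11 ^ k :=
    fun k => by
      obtain ⟨N, hN, hcov, hcard⟩ := exists_finset_subset_sphere_isCover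
        (E := EuclideanSpace ℝ (Fin k)) (ε := 1 / 5) (by norm_num)
      refine ⟨N, hN, hcov, hcard.trans_eq ?_⟩
      rw [finrank_euclideanSpace_fin]; norm_num
  obtain ⟨Nm, hNm, hcovm, hcardm⟩ := net m
  obtain ⟨Nn, hNn, hcovn, hcardn⟩ := net n
  set e := Real.exp (-2 * (23 / 25 * t) ^ 2 / L ^ 2)
  have hincl : {ω | t ≤ specNorm (Z ω)} ⊆
      ⋃ x ∈ Nm, ⋃ y ∈ Nn, {ω | 23 / 25 * t ≤ ⟪x, Matrix.toEuclideanLin (Z ω) y⟫} := by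
    intro ω hω
    set T := LinearMap.toContinuousLinearMap (Matrix.toEuclideanLin (Z ω))
    have hT : t ≤ ‖T‖ := by rw [← specNorm_eq_norm_toContinuousLinearMap]; exact hω
    obtain ⟨x, hx, y, hy, hxy⟩ := T.exists_mem_mul_norm_le_inner_apply
      (norm_pos_iff.1 (ht.trans_le hT)) hNm hNn hcovm hcovn
    simp only [mem_iUnion]
    refine ⟨x, hx, y, hy, le_trans ?_ hxy⟩
    norm_num
    linarith
  have htail : ∀ x ∈ Nm, ∀ y ∈ Nn,
      μ {ω | 23 / 25 * t ≤ ⟪x, Matrix.toEuclideanLin (Z ω) y⟫} ≤ ENNReal.ofReal e :=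
    fun x hx y hy => measure_le_inner_toEuclideanLin_le hind hmeas hmean hbound
      (by simpa using hNm hx) (by simpa using hNn hy) (by positivity)
  calc μ {ω | t ≤ specNorm (Z ω)}
      ≤ ∑ x ∈ Nm, ∑ y ∈ Nn, μ {ω | 23 / 25 * t ≤ ⟪x, Matrix.toEuclideanLin (Z ω) y⟫} :=
        (measure_mono hincl).trans <| (measure_biUnion_finset_le _ _).trans <|
          Finset.sum_le_sum fun x _ => measure_biUnion_finset_le _ _
    _ ≤ ∑ _x ∈ Nm, ∑ _y ∈ Nn, ENNReal.ofReal e :=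
        Finset.sum_le_sum fun x hx => Finset.sum_le_sum fun y hy => htail x hx y hy
    _ = ENNReal.ofReal (Nm.card * Nn.card * e) := by
        simp only [Finset.sum_const, nsmul_eq_mul]
        rw [ENNReal.ofReal_mul (by positivity), ENNReal.ofReal_mul (by positivity),
          ENNReal.ofReal_natCast, ENNReal.ofReal_natCast, mul_assoc]
    _ ≤ ENNReal.ofReal (11 ^ m * 11 ^ n * e) := by gcongr

end RandomMatrix

theorem integral_comp_of_eq_one_or_eq_neg_one {Ω : Type*} [MeasurableSpace Ω] {μ : Measure Ω}
    [IsProbabilityMeasure μ] {S : Ω → ℝ} (hS : Measurable S) (hpm : ∀ ω, S ω = 1 ∨ S ω = -1)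
    (g : ℝ → ℝ) :
    ∫ ω, g (S ω) ∂μ = μ.real {ω | S ω = 1} * g 1 + (1 - μ.real {ω | S ω = 1}) * g (-1) := by
  have hA : MeasurableSet {ω | S ω = 1} := hS (measurableSet_singleton 1)
  have hsplit : (fun ω => g (S ω)) =
      {ω | S ω = 1}.indicator (fun _ => g 1) + {ω | S ω = 1}ᶜ.indicator (fun _ => g (-1)) := by
    ext ω
    rcases hpm ω with h | h <;> norm_num [indicator, h]
  rw [hsplit, integral_add' ((integrable_const _).indicator hA)
      ((integrable_const _).indicator hA.compl),
    integral_indicator_const _ hA, integral_indicator_const _ hA.compl,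
    probReal_compl_eq_one_sub hA, smul_eq_mul, smul_eq_mul]

section OneBitModel
variable {m n : ℕ} (ΩS : Finset (Fin m × Fin n)) (f : ℝ → ℝ) (M : Matrix (Fin m) (Fin n) ℝ)

/-- The entry of `gradF ΩS Y f M` at `p` depends on `Y` only through the sign `s = Y p`. -/
def gradEntry (p : Fin m × Fin n) (s : ℝ) : ℝ := gradF ΩS (Matrix.of fun _ _ => s) f M p.1 p.2

theorem measurable_gradEntry (p : Fin m × Fin n) : Measurable (gradEntry ΩS f M p) := by
  unfold gradEntry gradF
  by_cases hp : p ∈ ΩS <;> simp only [Matrix.of_apply, Prod.mk.eta, hp, if_true, if_false]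
  · exact (measurable_const.ite (measurableSet_singleton 1) measurable_const).add
      (measurable_const.ite (measurableSet_singleton (-1)) measurable_const)
  · exact measurable_const

variable {f}

theorem gradEntry_mean (hf : ∀ x, f x ∈ Ioo 0 1) (p : Fin m × Fin n) :
    f (M p.1 p.2) * gradEntry ΩS f M p 1 + (1 - f (M p.1 p.2)) * gradEntry ΩS f M p (-1) = 0 := by
  have h0 := (hf (M p.1 p.2)).1
  have h1 : 1 - f (M p.1 p.2) ≠ 0 := by linarith [(hf (M p.1 p.2)).2]
  by_cases hp : p ∈ ΩS <;> norm_num [gradEntry, gradF, hp]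
  field_simp
  ring

theorem abs_gradEntry_sub_le (hf : ∀ x, f x ∈ Ioo 0 1) {α L : ℝ} (hM : ∀ i j, |M i j| ≤ α)
    (hL : ∀ x, |x| ≤ α → |deriv f x| / (f x * (1 - f x)) ≤ L) (hL0 : 0 ≤ L) (p : Fin m × Fin n) :
    |gradEntry ΩS f M p 1 - gradEntry ΩS f M p (-1)| ≤ L := by
  by_cases hp : p ∈ ΩS
  · have h0 := (hf (M p.1 p.2)).1
    have h1 : 0 < 1 - f (M p.1 p.2) := by linarith [(hf (M p.1 p.2)).2]
    have hgap : gradEntry ΩS f M p 1 - gradEntry ΩS f M p (-1) =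
        -(deriv f (M p.1 p.2) / (f (M p.1 p.2) * (1 - f (M p.1 p.2)))) := by
      norm_num [gradEntry, gradF, hp]
      field_simp
      ring
    rw [hgap, abs_neg, abs_div, abs_of_pos (mul_pos h0 h1)]
    exact hL _ (hM p.1 p.2)
  · simpa [gradEntry, gradF, hp] using hL0

theorem gradF_apply_mem_Icc {Y : Matrix (Fin m) (Fin n) ℝ} (hY : ∀ i j, Y i j = 1 ∨ Y i j = -1)
    {L : ℝ} (hL : ∀ p, |gradEntry ΩS f M p 1 - gradEntry ΩS f M p (-1)| ≤ L) (p : Fin m × Fin n) :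
    gradF ΩS Y f M p.1 p.2 ∈ Icc (min (gradEntry ΩS f M p 1) (gradEntry ΩS f M p (-1)))
      (min (gradEntry ΩS f M p 1) (gradEntry ΩS f M p (-1)) + L) := by
  change gradEntry ΩS f M p (Y p.1 p.2) ∈ _
  have hab := abs_sub_le_iff.1 (hL p)
  have hL0 := (abs_nonneg _).trans (hL p)
  rw [← min_add_add_right]
  rcases hY p.1 p.2 with h | h <;> rw [h]
  · exact ⟨min_le_left _ _, le_min (by linarith) (by linarith)⟩
  · exact ⟨min_le_right _ _, le_min (by linarith) (by linarith)⟩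

variable {Ω : Type*} [MeasurableSpace Ω] {P : Measure Ω} {Y : Ω → Matrix (Fin m) (Fin n) ℝ}

theorem iIndepFun_gradF (hY : iIndepFun (fun (p : Fin m × Fin n) ω => Y ω p.1 p.2) P) :
    iIndepFun (fun (p : Fin m × Fin n) ω => gradF ΩS (Y ω) f M p.1 p.2) P :=
  hY.comp (gradEntry ΩS f M) (measurable_gradEntry ΩS f M)

theorem integral_gradF_apply [IsProbabilityMeasure P] (hf : ∀ x, f x ∈ Ioo 0 1)
    (hYpm : ∀ ω i j, Y ω i j = 1 ∨ Y ω i j = -1)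
    (hYmeas : ∀ p : Fin m × Fin n, Measurable fun ω => Y ω p.1 p.2)
    (hq : ∀ p ∈ ΩS, P {ω | Y ω p.1 p.2 = 1} = ENNReal.ofReal (f (M p.1 p.2)))
    (p : Fin m × Fin n) :
    ∫ ω, gradF ΩS (Y ω) f M p.1 p.2 ∂P = 0 := by
  change ∫ ω, gradEntry ΩS f M p (Y ω p.1 p.2) ∂P = 0
  rw [integral_comp_of_eq_one_or_eq_neg_one (hYmeas p) (fun ω => hYpm ω p.1 p.2)]
  by_cases hp : p ∈ ΩS
  · rw [measureReal_def, hq p hp, ENNReal.toReal_ofReal (hf _).1.le, gradEntry_mean ΩS M hf p]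
  · simp [gradEntry, gradF, hp]

end OneBitModel

theorem eleven_pow_mul_eleven_pow_mul_exp_le {m n : ℕ} (hnm : n ≤ m) {c : ℝ} (hc : 6 ≤ c) :
    (11 : ℝ) ^ m * 11 ^ n * Real.exp (-(c * m)) ≤ Real.exp (-m) := by
  have h121 : (121 : ℝ) ≤ Real.exp 5 := by
    have := Real.exp_one_gt_d9
    calc (121 : ℝ) ≤ 2.7 ^ 5 := by norm_num
      _ ≤ Real.exp 1 ^ 5 := by gcongr; linarith
      _ = Real.exp 5 := by rw [← Real.exp_nat_mul]; norm_num
  calc (11 : ℝ) ^ m * 11 ^ n * Real.exp (-(c * m)) ≤ 121 ^ m * Real.exp (-(6 * m)) := by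
        gcongr
        calc (11 : ℝ) ^ m * 11 ^ n ≤ 11 ^ m * 11 ^ m := by gcongr; norm_num
          _ = 121 ^ m := by rw [← mul_pow]; norm_num
    _ ≤ Real.exp 5 ^ m * Real.exp (-(6 * m)) := by gcongr
    _ = Real.exp (-m) := by rw [← Real.exp_nat_mul, ← Real.exp_add]; ring_nf

end GradientConcentration

/-- Spectral-norm concentration of the realized gradient: for the gradient
Z = ∇F(M*) under the 1-bit observation model with independent entries,
P(‖Z‖₂ ≥ 2.01·L_α·√m) ≤ C₁(ε)·exp(−C₂·m). -/
theorem one_bit_mc_gradient_spectral_concentration :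
    ∀ ε ∈ Set.Ioo (0 : ℝ) 1,
      ∃ C₁ : ℝ, 0 < C₁ ∧ ∃ C₂ : ℝ, 0 < C₂ ∧
        ∀ (m n : ℕ) (α Lα : ℝ)
          (Mstar : Matrix (Fin m) (Fin n) ℝ)
          (ΩS : Finset (Fin m × Fin n)) (f : ℝ → ℝ)
          (Ωs : Type) [MeasurableSpace Ωs] (P : Measure Ωs)
          [IsProbabilityMeasure P]
          (Y : Ωs → Matrix (Fin m) (Fin n) ℝ),
          n ≤ m →
          -- ‖M*‖_∞ ≤ α
          (∀ i j, |Mstar i j| ≤ α) →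
          -- twice differentiable link f : ℝ → (0,1)
          (∀ x, f x ∈ Set.Ioo (0 : ℝ) 1) →
          Differentiable ℝ f → Differentiable ℝ (deriv f) →
          -- L_α as in (6), finite and positive
          (∀ x, |x| ≤ α → |deriv f x| / (f x * (1 - f x)) ≤ Lα) →
          0 < Lα →
          -- the 1-bit observation model, with independent entries
          (∀ ω i j, Y ω i j = 1 ∨ Y ω i j = -1) →
          (∀ p : Fin m × Fin n, Measurable fun ω => Y ω p.1 p.2) →
          (∀ p ∈ ΩS, P {ω | Y ω p.1 p.2 = 1} = ENNReal.ofReal (f (Mstar p.1 p.2))) →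
          iIndepFun (fun (p : Fin m × Fin n) ω => Y ω p.1 p.2) P →
          P {ω | 2.01 * Lα * Real.sqrt m ≤ specNorm (gradF ΩS (Y ω) f Mstar)} ≤
            ENNReal.ofReal (C₁ * Real.exp (-C₂ * m)) := by
  intro ε _
  refine ⟨1, one_pos, 1, one_pos, ?_⟩
  intro m n α Lα Mstar ΩS f Ωs _ P _ Y hnm hMα hf01 _ _ hLα hLpos hYpm hYmeas hq hInd
  rcases Nat.eq_zero_or_pos m with rfl | hm
  · simpa using prob_le_one
  have hgap := abs_gradEntry_sub_le ΩS Mstar hf01 hMα hLα hLpos.le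
  refine (measure_le_specNorm_le (iIndepFun_gradF ΩS Mstar hInd)
    (fun p => ((measurable_gradEntry ΩS f Mstar p).comp (hYmeas p)).aemeasurable)
    (integral_gradF_apply ΩS Mstar hf01 hYpm hYmeas hq)
    (fun p => ae_of_all _ fun ω => gradF_apply_mem_Icc ΩS Mstar (hYpm ω) hgap p)
    (by positivity)).trans (ENNReal.ofReal_le_ofReal ?_)
  have hexp : -2 * (23 / 25 * (2.01 * Lα * √m)) ^ 2 / Lα ^ 2 =
      -(2 * (23 / 25 * 2.01) ^ 2 * m) := by
    rw [mul_pow, mul_pow, Real.sq_sqrt (Nat.cast_nonneg m)]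
    field_simp
  rw [hexp, one_mul, neg_one_mul]
  exact eleven_pow_mul_eleven_pow_mul_exp_le hnm (by norm_num)
end
end
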